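/- arXiv:alg-geom/9505001 — 2 statements merged into one kernel-verified Lean document; each statement's English description precedes it below -/
import Mathlib

section
/- Let k, m, n be positive integers with k+m ≤ n and let w, w′ ∈ Sₙ. Then w →_{r[k,m]} w′ if and only if w₀ww₀ →_{c[n−k,m]} w₀w′w₀. -/
/-! Conjugation by `w₀` relabels positions by `j ↦ n+1-j`. It preserves length and sends
`t_{a,b}` to `t_{n+1-b,n+1-a}`, so a chain `a_i ≤ k < b_i` for `w` becomes a chain
`n+1-b_i ≤ n-k < n+1-a_i` for `w₀ww₀`, with the roles of the `a_i` and the `b_i` exchanged. -/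

open Equiv MvPolynomial

attribute [local instance] Classical.propDecidable

namespace SchubertPieri

/-- Position `j ∈ {1,…,N}` (1-indexed) as an element of `Fin N` (0-indexed). -/
def pos (N : ℕ) [NeZero N] (j : ℕ) : Fin N :=
  ⟨(j - 1) % N, Nat.mod_lt _ (Nat.pos_of_ne_zero (NeZero.ne N))⟩

/-- The transposition `t_{a,b}` interchanging positions `a` and `b` (1-indexed). -/
def t (N : ℕ) [NeZero N] (a b : ℕ) : Equiv.Perm (Fin N) :=
  Equiv.swap (pos N a) (pos N b)

/-- The value `w(j)` for `j ∈ {1,…,N}` (1-indexed). -/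
def val {N : ℕ} [NeZero N] (w : Equiv.Perm (Fin N)) (j : ℕ) : ℕ :=
  (w (pos N j) : ℕ) + 1

/-- The length of `w`: its number of inversions. -/
def len {N : ℕ} (w : Equiv.Perm (Fin N)) : ℕ :=
  (Finset.univ.filter fun p : Fin N × Fin N => p.1 < p.2 ∧ w p.2 < w p.1).card

/-- The longest permutation `w₀ : j ↦ N+1-j`. -/
def w0 (N : ℕ) : Equiv.Perm (Fin N) :=
  ⟨Fin.rev, Fin.rev, Fin.rev_rev, Fin.rev_rev⟩

/-- The product `t_{a 0, b 0} ⋯ t_{a (i-1), b (i-1)}`. -/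
def tProd (N : ℕ) [NeZero N] (a b : ℕ → ℕ) (i : ℕ) : Equiv.Perm (Fin N) :=
  ((List.range i).map fun j => t N (a j) (b j)).prod

/-- `r[k,m] = t_{k,k+1} t_{k,k+2} ⋯ t_{k,k+m}`, the (m+1)-cycle with
`r[k,m](k) = k+m` and `r[k,m](j) = j-1` for `k+1 ≤ j ≤ k+m`. -/
def rPerm (N k m : ℕ) [NeZero N] : Equiv.Perm (Fin N) :=
  ((List.range m).map fun i => t N k (k + 1 + i)).prod

/-- `c[k,m] = t_{k,k+1} t_{k-1,k+1} ⋯ t_{k-m+1,k+1}`, the (m+1)-cycle with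
`c[k,m](j) = j+1` for `k-m+1 ≤ j ≤ k` and `c[k,m](k+1) = k-m+1`. -/
def cPerm (N k m : ℕ) [NeZero N] : Equiv.Perm (Fin N) :=
  ((List.range m).map fun i => t N (k - i) (k + 1)).prod

/-- The conditions that `aᵢ ≤ k < bᵢ` (with all indices in `{1,…,N}`) and that
`ℓ(w t_{a₁ b₁} ⋯ t_{aᵢ bᵢ}) = ℓ(w) + i` for `1 ≤ i ≤ m`. -/
def StepOK (N k m : ℕ) [NeZero N] (w : Equiv.Perm (Fin N)) (a b : ℕ → ℕ) : Prop :=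
  (∀ i, i < m → 1 ≤ a i ∧ a i ≤ k ∧ k < b i ∧ b i ≤ N) ∧
  (∀ i, i ≤ m → len (w * tProd N a b i) = len w + i)

/-- `w →_{r[k,m]} w'`. -/
def RelR (N k m : ℕ) [NeZero N] (w w' : Equiv.Perm (Fin N)) : Prop :=
  ∃ a b : ℕ → ℕ, StepOK N k m w a b ∧ w' = w * tProd N a b m ∧
    (∀ i j, i < m → j < m → i ≠ j → b i ≠ b j)

/-- `w →_{c[k,m]} w'`. -/
def RelC (N k m : ℕ) [NeZero N] (w w' : Equiv.Perm (Fin N)) : Prop :=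
  ∃ a b : ℕ → ℕ, StepOK N k m w a b ∧ w' = w * tProd N a b m ∧
    (∀ i j, i < m → j < m → i ≠ j → a i ≠ a j)

/-- The divided difference operator `∂ᵢ f = (f - sᵢ·f)/(xᵢ - xᵢ₊₁)` (1-indexed `i`);
the quotient is exact, and is recovered here as the (unique) witness of divisibility. -/
noncomputable def divDiff {N : ℕ} [NeZero N] (i : ℕ) (f : MvPolynomial (Fin N) ℤ) :
    MvPolynomial (Fin N) ℤ :=
  if h : (X (pos N i) - X (pos N (i + 1))) ∣ (f - rename (⇑(t N i (i + 1))) f) then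
    h.choose
  else 0

/-- `∂_{a₁} ∘ ⋯ ∘ ∂_{a_p}` applied to `f`, for a word `l = [a₁,…,a_p]`. -/
noncomputable def divDiffWord {N : ℕ} [NeZero N] (l : List ℕ) (f : MvPolynomial (Fin N) ℤ) :
    MvPolynomial (Fin N) ℤ :=
  l.foldr divDiff f

/-- Auxiliary: produce a reduced word for `w` by repeatedly removing a descent. -/
def redWordAux (N : ℕ) [NeZero N] : ℕ → Equiv.Perm (Fin N) → List ℕ
  | 0, _ => []
  | fuel + 1, w =>
    match ((List.range (N - 1)).map (· + 1)).find? (fun i => decide (val w (i + 1) < val w i)) with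
    | none => []
    | some i => redWordAux N fuel (w * t N i (i + 1)) ++ [i]

/-- A canonical reduced word `(a₁,…,a_p)` for `w`, i.e. `w = s_{a₁} ⋯ s_{a_p}` with `p = ℓ(w)`. -/
def redWord (N : ℕ) [NeZero N] (w : Equiv.Perm (Fin N)) : List ℕ :=
  redWordAux N (N * N) w

/-- The staircase monomial `x₁^{N-1} x₂^{N-2} ⋯ x_{N-1}`. -/
noncomputable def staircase (N : ℕ) : MvPolynomial (Fin N) ℤ :=
  ∏ i : Fin N, X i ^ (N - 1 - (i : ℕ))

/-- The Schubert polynomial `𝔖_w = ∂_{w⁻¹w₀}(x₁^{N-1} ⋯ x_{N-1})`. -/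
noncomputable def schubertPoly (N : ℕ) [NeZero N] (w : Equiv.Perm (Fin N)) :
    MvPolynomial (Fin N) ℤ :=
  divDiffWord (redWord N (w⁻¹ * w0 N)) (staircase N)

/-- The ideal of `Rₙ` generated by the symmetric polynomials with zero constant term. -/
noncomputable def symIdeal (N : ℕ) : Ideal (MvPolynomial (Fin N) ℤ) :=
  Ideal.span {f : MvPolynomial (Fin N) ℤ | f.IsSymmetric ∧ constantCoeff f = 0}

/-- The ring `Hₙ = Rₙ/𝒮`. -/
abbrev HRing (N : ℕ) := MvPolynomial (Fin N) ℤ ⧸ symIdeal N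

/-- The class of the Schubert polynomial `𝔖_w` in `Hₙ`. -/
noncomputable def SS (N : ℕ) [NeZero N] (w : Equiv.Perm (Fin N)) : HRing N :=
  Ideal.Quotient.mk (symIdeal N) (schubertPoly N w)

/-- The complete homogeneous symmetric polynomial of degree `m` in `x₁,…,x_k`. -/
noncomputable def hPoly (N k m : ℕ) : MvPolynomial (Fin N) ℤ :=
  ∑ s ∈ (Finset.univ.filter fun i : Fin N => (i : ℕ) < k).sym m,
    (Multiset.map X (s : Multiset (Fin N))).prod

/-- The elementary symmetric polynomial of degree `m` in `x₁,…,x_k`. -/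
noncomputable def ePoly (N k m : ℕ) : MvPolynomial (Fin N) ℤ :=
  ∑ s ∈ (Finset.univ.filter fun i : Fin N => (i : ℕ) < k).powersetCard m, ∏ i ∈ s, X i

/-- Covering relation of the `k`-Bruhat order. -/
def kCover (N k : ℕ) [NeZero N] (w w' : Equiv.Perm (Fin N)) : Prop :=
  ∃ a b : ℕ, 1 ≤ a ∧ a ≤ k ∧ k < b ∧ b ≤ N ∧ w' = w * t N a b ∧ len w' = len w + 1

/-- The (strict) `k`-Bruhat order `<ₖ`. -/
def kBruhat (N k : ℕ) [NeZero N] : Equiv.Perm (Fin N) → Equiv.Perm (Fin N) → Prop :=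
  Relation.TransGen (kCover N k)

/-- The label `w⁽ⁱ⁺¹⁾(a_{i+1})` (0-indexed `i`) of the `(i+1)`-st step of a path. -/
def label {N : ℕ} [NeZero N] (w : Equiv.Perm (Fin N)) (a b : ℕ → ℕ) (i : ℕ) : ℕ :=
  val (w * tProd N a b (i + 1)) (a i)

/-- `(a,b)` encodes a path of length `m` in the `k`-Bruhat order from `w` to `w'`
(normalized so that `a i = b i = 0` for `i ≥ m`, making the encoding unique). -/
def PathWit (N k m : ℕ) [NeZero N] (w w' : Equiv.Perm (Fin N))
    (ab : (ℕ → ℕ) × (ℕ → ℕ)) : Prop :=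
  StepOK N k m w ab.1 ab.2 ∧ w' = w * tProd N ab.1 ab.2 m ∧
    ∀ i, m ≤ i → ab.1 i = 0 ∧ ab.2 i = 0

/-- Paths of length `m` in the `k`-Bruhat order from `w` to `w'` with strictly
increasing labels. -/
def IncPaths (N k m : ℕ) [NeZero N] (w w' : Equiv.Perm (Fin N)) :
    Set ((ℕ → ℕ) × (ℕ → ℕ)) :=
  {ab | PathWit N k m w w' ab ∧
    ∀ i j, i < j → j < m → label w ab.1 ab.2 i < label w ab.1 ab.2 j}

/-- Paths of length `m` in the `k`-Bruhat order from `w` to `w'` with strictly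
decreasing labels. -/
def DecPaths (N k m : ℕ) [NeZero N] (w w' : Equiv.Perm (Fin N)) :
    Set ((ℕ → ℕ) × (ℕ → ℕ)) :=
  {ab | PathWit N k m w w' ab ∧
    ∀ i j, i < j → j < m → label w ab.1 ab.2 j < label w ab.1 ab.2 i}


/-- The cycle `(x₁ x₂ … x_r)` (sending `x₁ ↦ x₂ ↦ ⋯ ↦ x_r ↦ x₁`), as a product
of transpositions. -/
def cycleList (N : ℕ) [NeZero N] (l : List ℕ) : Equiv.Perm (Fin N) :=
  ((l.zip l.tail).map fun p => t N p.1 p.2).prod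

/-- The Grassmannian permutation `h[k;p,q]` of descent `k` and hook shape `(p,1^{q-1})`:
the `(p+q)`-cycle `(k-q+1  k-q+2 … k  k+p  k+p-1 … k+1)`. -/
def hookPerm (N k p q : ℕ) [NeZero N] : Equiv.Perm (Fin N) :=
  cycleList N (((List.range q).map fun i => k - q + 1 + i) ++
    ((List.range p).reverse.map fun i => k + 1 + i))

/-- `w|ₚ ∈ S_{N-1}`: delete row `p` and column `w(p)` from the permutation matrix of `w`. -/
def drop {N : ℕ} (w : Equiv.Perm (Fin (N + 1))) (p : Fin (N + 1)) : Equiv.Perm (Fin N) :=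
  Equiv.removeNone (((finSuccEquiv' p).symm.trans (w : Fin (N + 1) ≃ Fin (N + 1))).trans
    (finSuccEquiv' (w p)))

/-- `lam` is a partition with at most `k` parts (1-indexed parts `lam 1 ≥ lam 2 ≥ ⋯`,
normalized by `lam 0 = 0`). -/
def IsPartFun (k : ℕ) (lam : ℕ → ℕ) : Prop :=
  lam 0 = 0 ∧ (∀ j, 1 ≤ j → lam (j + 1) ≤ lam j) ∧ ∀ j, k < j → lam j = 0

/-- `h_d(x₁,…,x_k)` for an integer `d`, with `h_d = 0` for `d < 0`. -/
noncomputable def hPolyZ (N k : ℕ) (d : ℤ) : MvPolynomial (Fin N) ℤ :=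
  if 0 ≤ d then hPoly N k d.toNat else 0

/-- The Schur polynomial `s_λ(x₁,…,x_k)`, via the Jacobi–Trudi determinant
`det(h_{λᵢ+j-i})_{1 ≤ i,j ≤ k}`. -/
noncomputable def schurPoly (N k : ℕ) (lam : ℕ → ℕ) : MvPolynomial (Fin N) ℤ :=
  (Matrix.of fun i j : Fin k =>
    hPolyZ N k ((lam ((i : ℕ) + 1) : ℤ) + (j : ℕ) - (i : ℕ))).det

/-- `r_j = #{i : aᵢ = j}` (with `i` ranging over `0,…,m-1`, 0-indexed). -/
def rJ (a : ℕ → ℕ) (m j : ℕ) : ℕ := ((Finset.range m).filter fun i => a i = j).card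

/-- `μ_j = r_{j+1} + ⋯ + r_k`. -/
def muJ (a : ℕ → ℕ) (m k j : ℕ) : ℕ :=
  if j = 0 then 0 else ∑ j' ∈ Finset.Icc (j + 1) k, rJ a m j'

/-- `λ_j = μ_j + r_j`. -/
def lamJ (a : ℕ → ℕ) (m k j : ℕ) : ℕ :=
  if j = 0 then 0 else muJ a m k j + rJ a m j

/-- `d_j = #{i : bᵢ = N+1-j}` (with `i` ranging over `0,…,m-1`, 0-indexed). -/
def dJ (b : ℕ → ℕ) (m N j : ℕ) : ℕ :=
  ((Finset.range m).filter fun i => b i = N + 1 - j).card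

/-- `μ′_j = d_{j+1} + ⋯ + d_{N-k}`. -/
def muJ' (b : ℕ → ℕ) (m N k j : ℕ) : ℕ :=
  if j = 0 then 0 else ∑ j' ∈ Finset.Icc (j + 1) (N - k), dJ b m N j'

/-- `λ′_j = μ′_j + d_j`. -/
def lamJ' (b : ℕ → ℕ) (m N k j : ℕ) : ℕ :=
  if j = 0 then 0 else muJ' b m N k j + dJ b m N j

/-- The conjugate (transpose) partition: `νᵗ_j = #{i : νᵢ ≥ j}`, for `ν` with at
most `k` parts. -/
def conjPart (k : ℕ) (nu : ℕ → ℕ) (j : ℕ) : ℕ :=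
  if j = 0 then 0 else ((Finset.Icc 1 k).filter fun i => j ≤ nu i).card

/-- `wv` is the Grassmannian permutation of descent `k` and shape `nu`:
`wv(j) = j + ν_{k+1-j}` for `1 ≤ j ≤ k`, and `wv` is increasing on `{k+1,…,N}`. -/
def IsGrassOf (N k : ℕ) [NeZero N] (nu : ℕ → ℕ) (wv : Equiv.Perm (Fin N)) : Prop :=
  (∀ j, 1 ≤ j → j ≤ k → val wv j = j + nu (k + 1 - j)) ∧
  (∀ j, k < j → j < N → val wv j < val wv (j + 1))

/-- Paths of length `m` in the `k`-Bruhat order from `w` to `w'` whose labels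
increase strictly for the first `p` steps and decrease strictly thereafter
(positions `p, p+1, …, m` being decreasing, 1-indexed). -/
def IncDecPaths (N k m p : ℕ) [NeZero N] (w w' : Equiv.Perm (Fin N)) :
    Set ((ℕ → ℕ) × (ℕ → ℕ)) :=
  {ab | PathWit N k m w w' ab ∧
    (∀ i j, i < j → j < p → label w ab.1 ab.2 i < label w ab.1 ab.2 j) ∧
    (∀ i j, p - 1 ≤ i → i < j → j < m → label w ab.1 ab.2 j < label w ab.1 ab.2 i)}

/-- Paths of length `m` in the `k`-Bruhat order from `w` to `w'` whose labels
decrease strictly for the first `q` steps and increase strictly thereafter. -/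
def DecIncPaths (N k m q : ℕ) [NeZero N] (w w' : Equiv.Perm (Fin N)) :
    Set ((ℕ → ℕ) × (ℕ → ℕ)) :=
  {ab | PathWit N k m w w' ab ∧
    (∀ i j, i < j → j < q → label w ab.1 ab.2 j < label w ab.1 ab.2 i) ∧
    (∀ i j, q - 1 ≤ i → i < j → j < m → label w ab.1 ab.2 i < label w ab.1 ab.2 j)}

section W0Conj

variable {N : ℕ}

lemma w0_mul_w0 : w0 N * w0 N = 1 :=
  Equiv.ext Fin.rev_rev

lemma w0_inv : (w0 N)⁻¹ = w0 N :=
  inv_eq_of_mul_eq_one_right w0_mul_w0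

lemma w0_conj_mul (u v : Perm (Fin N)) :
    w0 N * (u * v) * w0 N = (w0 N * u * w0 N) * (w0 N * v * w0 N) := by
  simp only [mul_assoc, ← mul_assoc (w0 N) (w0 N), w0_mul_w0, one_mul]

lemma w0_conj_w0_conj (u : Perm (Fin N)) : w0 N * (w0 N * u * w0 N) * w0 N = u := by
  simp only [mul_assoc, ← mul_assoc (w0 N) (w0 N), w0_mul_w0, one_mul, mul_one]

lemma len_w0_conj (u : Perm (Fin N)) : len (w0 N * u * w0 N) = len u := by
  have happ : ∀ p, (w0 N * u * w0 N) p = Fin.rev (u (Fin.rev p)) := fun _ => rfl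
  unfold len
  refine Finset.card_nbij' (fun p => (Fin.rev p.2, Fin.rev p.1))
    (fun p => (Fin.rev p.2, Fin.rev p.1)) ?_ ?_ (fun _ _ => by simp) (fun _ _ => by simp)
  all_goals
    intro p hp
    simp only [Finset.coe_filter, Finset.mem_univ, true_and, Set.mem_ofPred_eq, happ,
      Fin.rev_rev, Fin.rev_lt_rev] at hp ⊢
    exact hp

variable [NeZero N]

lemma w0_pos {j : ℕ} (h1 : 1 ≤ j) (h2 : j ≤ N) : w0 N (pos N j) = pos N (N + 1 - j) := by
  ext
  simp only [w0, Equiv.coe_fn_mk, Fin.val_rev, pos]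
  rw [Nat.mod_eq_of_lt (by omega), Nat.mod_eq_of_lt (by omega)]
  omega

lemma w0_conj_t {a b : ℕ} (ha : 1 ≤ a ∧ a ≤ N) (hb : 1 ≤ b ∧ b ≤ N) :
    w0 N * t N a b * w0 N = t N (N + 1 - b) (N + 1 - a) := by
  rw [t, t, ← w0_pos ha.1 ha.2, ← w0_pos hb.1 hb.2, Equiv.swap_apply_apply, w0_inv,
    Equiv.swap_comm]

lemma tProd_succ (a b : ℕ → ℕ) (i : ℕ) :
    tProd N a b (i + 1) = tProd N a b i * t N (a i) (b i) := by
  simp [tProd, List.range_succ]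

lemma w0_conj_tProd {a b : ℕ → ℕ} {i : ℕ}
    (h : ∀ j, j < i → (1 ≤ a j ∧ a j ≤ N) ∧ (1 ≤ b j ∧ b j ≤ N)) :
    w0 N * tProd N a b i * w0 N
      = tProd N (fun j => N + 1 - b j) (fun j => N + 1 - a j) i := by
  induction i with
  | zero => simp [tProd, w0_mul_w0]
  | succ i ih =>
    obtain ⟨ha, hb⟩ := h i i.lt_succ_self
    rw [tProd_succ, tProd_succ, w0_conj_mul, ih fun j hj => h j (hj.trans i.lt_succ_self),
      w0_conj_t ha hb]

variable {k m : ℕ} {w w' : Perm (Fin N)} {a b : ℕ → ℕ}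

lemma StepOK.w0_conj (h : StepOK N k m w a b) :
    StepOK N (N - k) m (w0 N * w * w0 N) (fun i => N + 1 - b i) (fun i => N + 1 - a i) := by
  obtain ⟨hbd, hlen⟩ := h
  refine ⟨fun i hi => by have := hbd i hi; dsimp only; omega, fun i hi => ?_⟩
  rw [← w0_conj_tProd fun j hj => by have := hbd j (hj.trans_le hi); omega, ← w0_conj_mul,
    len_w0_conj, len_w0_conj, hlen i hi]

lemma StepOK.w0_conj_mul_tProd (h : StepOK N k m w a b) :
    w0 N * (w * tProd N a b m) * w0 N = (w0 N * w * w0 N)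
      * tProd N (fun i => N + 1 - b i) (fun i => N + 1 - a i) m := by
  rw [w0_conj_mul, w0_conj_tProd fun j hj => by have := h.1 j hj; omega]

lemma RelR.w0_conj (h : RelR N k m w w') :
    RelC N (N - k) m (w0 N * w * w0 N) (w0 N * w' * w0 N) := by
  obtain ⟨a, b, hstep, rfl, hb⟩ := h
  refine ⟨_, _, hstep.w0_conj, hstep.w0_conj_mul_tProd, fun i j hi hj hij => ?_⟩
  have := hb i j hi hj hij
  have := hstep.1 i hi
  have := hstep.1 j hj
  omega

lemma RelC.w0_conj (h : RelC N k m w w') :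
    RelR N (N - k) m (w0 N * w * w0 N) (w0 N * w' * w0 N) := by
  obtain ⟨a, b, hstep, rfl, ha⟩ := h
  refine ⟨_, _, hstep.w0_conj, hstep.w0_conj_mul_tProd, fun i j hi hj hij => ?_⟩
  have := ha i j hi hj hij
  have := hstep.1 i hi
  have := hstep.1 j hj
  omega

end W0Conj

/-- The paper's `n` is `n + 1` here. -/
theorem relR_iff_relC_conj_general (n k m : ℕ) (hkm : k + m ≤ n + 1)
    (w w' : Equiv.Perm (Fin (n + 1))) :
    RelR (n + 1) k m w w' ↔
      RelC (n + 1) (n + 1 - k) m (w0 (n + 1) * w * w0 (n + 1))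
        (w0 (n + 1) * w' * w0 (n + 1)) := by
  refine ⟨RelR.w0_conj, fun h => ?_⟩
  simpa only [Nat.sub_sub_self (by omega : k ≤ n + 1), w0_conj_w0_conj] using h.w0_conj

/-- `w →_{r[k,m]} w'` iff `w₀ww₀ →_{c[n-k,m]} w₀w'w₀` (here the paper's `n` is `n+1`). -/
theorem relR_iff_relC_conj (n k m : ℕ) (hk : 1 ≤ k) (hm : 1 ≤ m) (hkm : k + m ≤ n + 1)
    (w w' : Equiv.Perm (Fin (n + 1))) :
    RelR (n + 1) k m w w' ↔
      RelC (n + 1) (n + 1 - k) m (w0 (n + 1) * w * w0 (n + 1))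
        (w0 (n + 1) * w' * w0 (n + 1)) :=
  relR_iff_relC_conj_general n k m hkm w w'

end SchubertPieri
end

section
/- Let w, w′ ∈ Sₙ with w <ₖ w′ in the k-Bruhat order, and let p be an integer with p > k and w(p) = w′(p). Then ℓ(w′|ₚ) − ℓ(w|ₚ) = ℓ(w′) − ℓ(w), and w|ₚ <ₖ w′|ₚ in the k-Bruhat order on Sₙ₋₁. -/
/-!
If `ℓ(u t_{A,B}) = ℓ(u) + 1` with `A < B`, then `u(A) < u(B)` and no `C` between `A` and `B`
has `u(A) < u(C) < u(B)` (otherwise the swap would gain at least three inversions).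
For a step of the `k`-Bruhat order (`A ≤ k < B`) and a position `P > k`, the value at `P`
therefore never increases, and it drops exactly when `P = B`. So `w(P) = w'(P)` forces every
step of the chain to avoid `P`, and such a step restricts to a step `u|_P → u|_P t_{A',B'}`
of the `k`-Bruhat order on `S_{n-1}`: the inversions of `u` are those of `u|_P` plus those
through `P`, and the number of the latter is unchanged: the partners `A` and `B` of `P` trade
places, except when `P` lies between them, where the absence of a middle value keeps the count.
-/

open Equiv MvPolynomial

attribute [local instance] Classical.propDecidable

namespace SchubertPieri

open Finset

section Inversions

variable {N : ℕ}

def invSet (u : Perm (Fin N)) : Finset (Fin N × Fin N) :=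
  univ.filter fun q => q.1 < q.2 ∧ u q.2 < u q.1

theorem len_eq_card_invSet (u : Perm (Fin N)) : len u = #(invSet u) := rfl

@[simp]
theorem mem_invSet {u : Perm (Fin N)} {q : Fin N × Fin N} :
    q ∈ invSet u ↔ q.1 < q.2 ∧ u q.2 < u q.1 := by
  simp [invSet]

theorem mem_invSet_sdiff_mul_swap {u : Perm (Fin N)} {A B : Fin N} (hAB : A < B)
    (hu : u A < u B) {q : Fin N × Fin N} (hq : q ∈ invSet u \ invSet (u * swap A B)) :
    (q.2 = A ∧ q.1 < A ∧ u A < u q.1 ∧ u q.1 < u B) ∨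
      (q.1 = B ∧ B < q.2 ∧ u A < u q.2 ∧ u q.2 < u B) := by
  obtain ⟨i, j⟩ := q
  simp only [mem_sdiff, mem_invSet, Perm.mul_apply, not_and, not_lt] at hq ⊢
  obtain ⟨⟨hij, hji⟩, hle⟩ := hq
  have hlt : u (swap A B i) < u (swap A B j) :=
    (hle hij).lt_of_ne (by simpa using hij.ne)
  clear hle
  by_cases hiA : i = A <;> by_cases hiB : i = B <;> by_cases hjA : j = A <;>
    by_cases hjB : j = B <;> simp_all [swap_apply_of_ne_of_ne] <;> omega

theorem len_add_card_le_len_mul_swap (u : Perm (Fin N)) {A B : Fin N} (hAB : A < B)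
    (hu : u A < u B) (S : Finset (Fin N × Fin N))
    (hS : S ⊆ invSet (u * swap A B) \ invSet u)
    (hSA : ∀ q ∈ S, q.1 < A → q.2 ≠ B) (hSB : ∀ q ∈ S, q.1 = A → ¬B < q.2) :
    len u + #S ≤ len (u * swap A B) := by
  have hbalance := card_sdiff_add_card_inter (invSet u) (invSet (u * swap A B))
  have hbalance' := card_sdiff_add_card_inter (invSet (u * swap A B)) (invSet u)
  rw [inter_comm] at hbalance'
  -- a lost inversion `(i, A)` or `(B, j)` is traded for the gained inversion `(i, B)` or `(A, j)`
  have hlost :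
      #(invSet u \ invSet (u * swap A B)) ≤ #((invSet (u * swap A B) \ invSet u) \ S) := by
    refine card_le_card_of_injOn (fun q => if q.2 = A then (q.1, B) else (A, q.2)) ?_ ?_
    · intro q hq
      rcases mem_invSet_sdiff_mul_swap hAB hu hq with ⟨h2, h1, hA, hB⟩ | ⟨h1, h2, hA, hB⟩
      · have hS : (q.1, B) ∉ S := fun h => hSA _ h h1 rfl
        simp [h2, h1.trans hAB, swap_apply_of_ne_of_ne h1.ne (h1.trans hAB).ne, hA, hB.le, hS]
      · have hS : (A, q.2) ∉ S := fun h => hSB _ h rfl h2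
        have : q.2 ≠ A := (hAB.trans h2).ne'
        simp [this, hAB.trans h2, swap_apply_of_ne_of_ne this h2.ne', hA.le, hB, hS]
    · intro q hq q' hq' h
      simp only at h
      rcases mem_invSet_sdiff_mul_swap hAB hu hq with ⟨h2, h1, -⟩ | ⟨h1, h2, -⟩ <;>
        rcases mem_invSet_sdiff_mul_swap hAB hu hq' with ⟨h2', h1', -⟩ | ⟨h1', h2', -⟩ <;>
        split_ifs at h <;> simp only [Prod.ext_iff] at h ⊢ <;> omega
  have hsplit := card_sdiff_add_card_eq_card hS
  rw [len_eq_card_invSet, len_eq_card_invSet]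
  omega

theorem len_lt_len_mul_swap (u : Perm (Fin N)) {A B : Fin N} (hAB : A < B) (hu : u A < u B) :
    len u < len (u * swap A B) := by
  simpa using len_add_card_le_len_mul_swap u hAB hu {(A, B)}
    (by simp [hAB, hu, hu.le]) (by simp) (by simp)

theorem len_add_three_le_len_mul_swap (u : Perm (Fin N)) {A B C : Fin N} (hAC : A < C)
    (hCB : C < B) (hA : u A < u C) (hB : u C < u B) :
    len u + 3 ≤ len (u * swap A B) := by
  have hC : swap A B C = C := swap_apply_of_ne_of_ne hAC.ne' hCB.ne
  have hcard : #({(A, B), (A, C), (C, B)} : Finset (Fin N × Fin N)) = 3 := by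
    rw [card_insert_of_notMem (by simp [hCB.ne', hAC.ne]),
      card_insert_of_notMem (by simp [hAC.ne]), card_singleton]
  have := len_add_card_le_len_mul_swap u (hAC.trans hCB) (hA.trans hB)
    {(A, B), (A, C), (C, B)} ?_ (by simp [hAC.le]) (by simp [hCB.le])
  · omega
  · simp [insert_subset_iff, hC, hAC, hCB, hAC.trans hCB, hA, hB, hA.le, hB.le, hA.trans hB,
      (hA.trans hB).le]

theorem lt_of_len_mul_swap_eq_succ {u : Perm (Fin N)} {A B : Fin N} (hAB : A < B)
    (h : len (u * swap A B) = len u + 1) : u A < u B := by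
  by_contra! hBA
  have := len_lt_len_mul_swap (u * swap A B) hAB
    (by simpa using hBA.lt_of_ne (u.injective.ne hAB.ne'))
  rw [mul_swap_mul_self] at this
  omega

theorem not_between_of_len_mul_swap_eq_succ {u : Perm (Fin N)} {A B C : Fin N}
    (h : len (u * swap A B) = len u + 1) (hAC : A < C) (hCB : C < B) :
    ¬(u A < u C ∧ u C < u B) := fun ⟨hA, hB⟩ =>
  by have := len_add_three_le_len_mul_swap u hAC hCB hA hB; omega

end Inversions

section Drop

variable {N : ℕ}

theorem succAbove_drop_apply (w : Perm (Fin (N + 1))) (P : Fin (N + 1)) (j : Fin N) :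
    (w P).succAbove (drop w P j) = w (P.succAbove j) := by
  obtain ⟨i, hi⟩ := Fin.exists_succAbove_eq (w.injective.ne (P.succAbove_ne j))
  have he : ((finSuccEquiv' P).symm.trans (w : Fin (N + 1) ≃ Fin (N + 1))).trans
      (finSuccEquiv' (w P)) (some j) = some i := by
    simp [← hi, finSuccEquiv'_succAbove]
  have := removeNone_some _ ⟨i, he⟩
  rw [he, Option.some_inj] at this
  rw [drop, this, hi]

theorem drop_lt_drop_iff (w : Perm (Fin (N + 1))) (P : Fin (N + 1)) {i j : Fin N} :
    drop w P i < drop w P j ↔ w (P.succAbove i) < w (P.succAbove j) := by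
  rw [← succAbove_drop_apply, ← succAbove_drop_apply, Fin.succAbove_lt_succAbove_iff]

theorem drop_mul_swap_succAbove (u : Perm (Fin (N + 1))) (P : Fin (N + 1)) (A B : Fin N) :
    drop (u * swap (P.succAbove A) (P.succAbove B)) P = drop u P * swap A B := by
  have hP : (u * swap (P.succAbove A) (P.succAbove B)) P = u P := by
    simp [swap_apply_of_ne_of_ne (P.ne_succAbove A) (P.ne_succAbove B)]
  ext j : 1
  apply Fin.succAbove_right_injective (p := u P)
  have := succAbove_drop_apply (u * swap (P.succAbove A) (P.succAbove B)) P j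
  rw [hP] at this
  rw [this, Perm.mul_apply, Perm.mul_apply, succAbove_drop_apply,
    Fin.succAbove_right_injective.swap_apply]

def invPartners (u : Perm (Fin N)) (P : Fin N) : Finset (Fin N) :=
  univ.filter fun i => (i < P ∧ u P < u i) ∨ (P < i ∧ u i < u P)

theorem card_invSet_filter_mem (u : Perm (Fin N)) (P : Fin N) :
    #((invSet u).filter fun q => q.1 = P ∨ q.2 = P) = #(invPartners u P) := by
  refine card_nbij' (fun q => if q.1 = P then q.2 else q.1)
    (fun i => if i < P then (i, P) else (P, i)) ?_ ?_ ?_ ?_ <;>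
    intro q hq <;> simp only [coe_filter, invPartners, mem_invSet, mem_univ, true_and] at hq ⊢ <;>
    split_ifs <;> grind

theorem card_invSet_filter_not_mem (u : Perm (Fin (N + 1))) (P : Fin (N + 1)) :
    #((invSet u).filter fun q => ¬(q.1 = P ∨ q.2 = P)) = len (drop u P) := by
  rw [len_eq_card_invSet, eq_comm]
  refine card_nbij (fun q => (P.succAbove q.1, P.succAbove q.2)) ?_ ?_ ?_
  · intro q hq
    simp only [mem_coe, mem_invSet, drop_lt_drop_iff] at hq
    simp [Fin.succAbove_lt_succAbove_iff, hq, Fin.succAbove_ne]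
  · intro q _ q' _ h
    simpa [Prod.ext_iff] using h
  · rintro ⟨i, j⟩ hq
    simp only [coe_filter, mem_invSet, not_or, Set.mem_ofPred_eq] at hq
    obtain ⟨⟨hij, hu⟩, hi, hj⟩ := hq
    obtain ⟨i, rfl⟩ := Fin.exists_succAbove_eq hi
    obtain ⟨j, rfl⟩ := Fin.exists_succAbove_eq hj
    refine ⟨(i, j), ?_, rfl⟩
    rw [mem_coe, mem_invSet, drop_lt_drop_iff, ← Fin.succAbove_lt_succAbove_iff (p := P)]
    exact ⟨hij, hu⟩

theorem len_eq_len_drop_add_card_invPartners (u : Perm (Fin (N + 1))) (P : Fin (N + 1)) :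
    len u = len (drop u P) + #(invPartners u P) := by
  have := card_filter_add_card_filter_not (s := invSet u) fun q => q.1 = P ∨ q.2 = P
  rw [card_invSet_filter_mem, card_invSet_filter_not_mem] at this
  rw [len_eq_card_invSet u]
  omega

theorem val_succAbove (P : Fin (N + 1)) (i : Fin N) :
    (P.succAbove i : ℕ) = if (i : ℕ) < P then (i : ℕ) else (i : ℕ) + 1 := by
  unfold Fin.succAbove
  split_ifs <;> simp_all [Fin.lt_def]

theorem card_invPartners_mul_swap (u : Perm (Fin N)) {A B P : Fin N} (hAB : A < B)
    (hu : u A < u B) (hPA : P ≠ A) (hPB : P ≠ B)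
    (hmid : ¬(A < P ∧ P < B ∧ u A < u P ∧ u P < u B)) :
    #(invPartners (u * swap A B) P) = #(invPartners u P) := by
  have hP : (u * swap A B) P = u P := by simp [swap_apply_of_ne_of_ne hPA hPB]
  simp only [invPartners, card_filter]
  rw [← sum_add_sum_compl {A, B}, ← sum_add_sum_compl {A, B}]
  congr 1
  · -- only the partners `A` and `B` can change; they trade places unless `P` lies between them
    rw [sum_pair hAB.ne, sum_pair hAB.ne, hP]
    simp only [Perm.mul_apply, swap_apply_left, swap_apply_right]
    have := u.injective.ne hPA
    have := u.injective.ne hPB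
    split_ifs <;> omega
  · refine sum_congr rfl fun i hi => ?_
    simp only [mem_compl, mem_insert, mem_singleton, not_or] at hi
    rw [hP, Perm.mul_apply, swap_apply_of_ne_of_ne hi.1 hi.2]

end Drop

section KBruhat

variable {N k : ℕ} [NeZero N]

theorem coe_pos_eq_sub_one {j : ℕ} (hj : j ≤ N) : (pos N j : ℕ) = j - 1 :=
  Nat.mod_eq_of_lt (by have := NeZero.pos N; omega)

theorem kCover_iff {u v : Perm (Fin N)} :
    kCover N k u v ↔ ∃ A B : Fin N,
      (A : ℕ) < k ∧ k ≤ (B : ℕ) ∧ v = u * swap A B ∧ len v = len u + 1 := by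
  constructor
  · rintro ⟨a, b, ha, hak, hkb, hb, rfl, hlen⟩
    exact ⟨pos N a, pos N b, by rw [coe_pos_eq_sub_one (by omega)]; omega,
      by rw [coe_pos_eq_sub_one hb]; omega, rfl, hlen⟩
  · rintro ⟨A, B, hA, hB, rfl, hlen⟩
    have hpos (C : Fin N) : pos N (C + 1) = C :=
      Fin.ext (by rw [coe_pos_eq_sub_one C.isLt]; rfl)
    exact ⟨A + 1, B + 1, by omega, by omega, by omega, B.isLt, by rw [t, hpos, hpos], hlen⟩

theorem kCover.len_eq {u v : Perm (Fin N)} (h : kCover N k u v) : len v = len u + 1 := by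
  obtain ⟨-, -, -, -, -, -, -, h⟩ := h
  exact h

theorem kCover.apply_le {u v : Perm (Fin N)} (h : kCover N k u v) {P : Fin N}
    (hP : k ≤ (P : ℕ)) : v P ≤ u P := by
  obtain ⟨A, B, hA, hB, rfl, hlen⟩ := kCover_iff.1 h
  have hPA : P ≠ A := by omega
  by_cases hPB : P = B
  · subst hPB
    simpa using (lt_of_len_mul_swap_eq_succ (by omega) hlen).le
  · simp [swap_apply_of_ne_of_ne hPA hPB]

theorem kCover.drop_of_apply_eq {u v : Perm (Fin (N + 1))} (h : kCover (N + 1) k u v)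
    {P : Fin (N + 1)} (hP : k ≤ (P : ℕ)) (hv : v P = u P) :
    kCover N k (drop u P) (drop v P) := by
  obtain ⟨A, B, hA, hB, rfl, hlen⟩ := kCover_iff.1 h
  have hAB : A < B := by omega
  have hAP : A < P := by omega
  have huAB := lt_of_len_mul_swap_eq_succ hAB hlen
  have hPB : P ≠ B := by
    rintro rfl
    simp only [Perm.mul_apply, swap_apply_right] at hv
    exact huAB.ne hv
  have hlen' : len (drop (u * swap A B) P) = len (drop u P) + 1 := by
    have h₁ := len_eq_len_drop_add_card_invPartners u P
    have h₂ := len_eq_len_drop_add_card_invPartners (u * swap A B) P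
    have h₃ := card_invPartners_mul_swap u hAB huAB hAP.ne' hPB
      fun ⟨_, hPB', hm⟩ => not_between_of_len_mul_swap_eq_succ hlen hAP hPB' hm
    omega
  obtain ⟨A, rfl⟩ := Fin.exists_succAbove_eq hAP.ne
  obtain ⟨B, rfl⟩ := Fin.exists_succAbove_eq hPB.symm
  rw [drop_mul_swap_succAbove] at hlen' ⊢
  refine kCover_iff.2 ⟨A, B, ?_, ?_, rfl, hlen'⟩ <;>
    rw [val_succAbove] at hA hB <;> split_ifs at hA hB <;> omega

theorem kBruhat.apply_le {u v : Perm (Fin N)} (h : kBruhat N k u v) {P : Fin N}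
    (hP : k ≤ (P : ℕ)) : v P ≤ u P := by
  induction h with
  | single h => exact h.apply_le hP
  | tail _ h ih => exact (h.apply_le hP).trans ih

theorem kBruhat.drop_of_apply_eq {u v : Perm (Fin (N + 1))} (h : kBruhat (N + 1) k u v)
    {P : Fin (N + 1)} (hP : k ≤ (P : ℕ)) (hv : v P = u P) :
    ((len (drop v P) : ℤ) - len (drop u P) = (len v : ℤ) - len u) ∧
      kBruhat N k (drop u P) (drop v P) := by
  induction h with
  | single h =>
    have h' := h.drop_of_apply_eq hP hv
    exact ⟨by rw [h.len_eq, h'.len_eq]; push_cast; ring, .single h'⟩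
  | @tail x v hux hxv ih =>
    -- `v P ≤ x P ≤ u P = v P`, so the intermediate permutation also fixes the value at `P`
    have hx : x P = u P := le_antisymm (kBruhat.apply_le hux hP) (hv ▸ hxv.apply_le hP)
    have h' := hxv.drop_of_apply_eq hP (hv.trans hx.symm)
    obtain ⟨ihlen, ihbru⟩ := ih hx
    exact ⟨by rw [hxv.len_eq, h'.len_eq]; push_cast; linarith, .tail ihbru h'⟩

end KBruhat

/-- If `w <ₖ w'` and `p > k` with `w(p) = w'(p)`, then
`ℓ(w'|ₚ) - ℓ(w|ₚ) = ℓ(w') - ℓ(w)` and `w|ₚ <ₖ w'|ₚ` (here the paper's `n` is `n+2`). -/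
theorem drop_length_and_kBruhat (n k p : ℕ) (w w' : Equiv.Perm (Fin (n + 2)))
    (hbru : kBruhat (n + 2) k w w') (hkp : k < p) (hpn : p ≤ n + 2)
    (hfix : val w p = val w' p) :
    ((len (drop w' (pos (n + 2) p)) : ℤ) - len (drop w (pos (n + 2) p)) =
      (len w' : ℤ) - len w) ∧
    kBruhat (n + 1) k (drop w (pos (n + 2) p)) (drop w' (pos (n + 2) p)) := by
  have hP : k ≤ (pos (n + 2) p : ℕ) := by rw [coe_pos_eq_sub_one hpn]; omega
  have hfix' : w' (pos (n + 2) p) = w (pos (n + 2) p) :=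
    Fin.ext (by simp only [val] at hfix; omega)
  exact hbru.drop_of_apply_eq hP hfix'

end SchubertPieri
end
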